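/- Let K be a compact subset of ℝ^d. The set of points p ∈ ℝ^d that admit more than one nearest point in K (i.e., the set of p for which the minimum of ‖p − q‖ over q ∈ K is attained at at least two distinct points of K) has Lebesgue measure zero in ℝ^d. -/

import Mathlib

/-!
The distance function `infDist · K` is `1`-Lipschitz, so by Rademacher's theorem it is
differentiable almost everywhere. At a point `p` with a nearest point `q`, the distance decreases
at unit speed along the segment towards `q`, so its derivative `L` satisfies
`L (q - p) = -‖q - p‖`. If `q₁ ≠ q₂` are both nearest, then `‖L‖ ≤ 1` gives
`‖q₁ - p‖ + ‖q₂ - p‖ ≤ ‖(q₁ - p) + (q₂ - p)‖`, which in a strictly convex space forces the two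
vectors, having equal norms, to coincide.
-/

open Metric Set MeasureTheory

section MetricSpace

variable {α : Type*} [PseudoMetricSpace α] {K : Set α} {p q : α}

def medialAxis (K : Set α) : Set α :=
  {p | ∃ q₁ ∈ K, ∃ q₂ ∈ K, q₁ ≠ q₂ ∧ IsMinOn (dist p) K q₁ ∧ IsMinOn (dist p) K q₂}

theorem Metric.infDist_eq_dist_of_isMinOn (hq : q ∈ K) (hmin : IsMinOn (dist p) K q) :
    infDist p K = dist p q := by
  refine le_antisymm (infDist_le_dist_of_mem hq) (not_lt.1 fun hlt => ?_)
  obtain ⟨y, hy, hdist⟩ := (infDist_lt_iff ⟨q, hq⟩).1 hlt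
  exact (isMinOn_iff.1 hmin y hy).not_gt hdist

end MetricSpace

section NormedSpace

variable {E : Type*} [NormedAddCommGroup E] [NormedSpace ℝ E] {K : Set E} {p q : E}

theorem fderiv_infDist_apply_sub_of_isMinOn (hdiff : DifferentiableAt ℝ (infDist · K) p)
    (hq : q ∈ K) (hmin : IsMinOn (dist p) K q) :
    fderiv ℝ (infDist · K) p (q - p) = -‖q - p‖ := by
  set v := q - p
  -- `t ↦ infDist (p + t • v) K + t * ‖v‖` is bounded by `‖v‖ = dist (p + t • v) q + t * ‖v‖`
  -- for `t ≤ 1`, with equality at `t = 0`.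
  have hmax : IsLocalMax (fun t : ℝ => infDist (p + t • v) K + t * ‖v‖) 0 := by
    filter_upwards [Iio_mem_nhds one_pos] with t (ht : t < 1)
    have hdist : dist (p + t • v) q = (1 - t) * ‖v‖ := by
      rw [dist_eq_norm, show p + t • v - q = -((1 - t) • v) by simp only [v]; module,
        norm_neg, norm_smul, Real.norm_of_nonneg (by linarith)]
    have hp : infDist p K = ‖v‖ := by
      rw [infDist_eq_dist_of_isMinOn hq hmin, dist_comm, dist_eq_norm]
    simp only [zero_smul, add_zero, zero_mul, hp]
    linarith [infDist_le_dist_of_mem (x := p + t • v) hq]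
  have hline : HasDerivAt (fun t : ℝ => p + t • v) v 0 := by
    simpa using ((hasDerivAt_id (0 : ℝ)).smul_const v).const_add p
  have hderiv : HasDerivAt (fun t : ℝ => infDist (p + t • v) K + t * ‖v‖)
      (fderiv ℝ (infDist · K) p v + ‖v‖) 0 := by
    have hf : HasFDerivAt (infDist · K) (fderiv ℝ (infDist · K) p)
        ((fun t : ℝ => p + t • v) 0) := by
      simpa using hdiff.hasFDerivAt
    exact (hf.comp_hasDerivAt 0 hline).add (hasDerivAt_mul_const ‖v‖)
  linarith [hmax.hasDerivAt_eq_zero hderiv]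

theorem not_differentiableAt_infDist_of_mem_medialAxis [StrictConvexSpace ℝ E]
    (hp : p ∈ medialAxis K) : ¬DifferentiableAt ℝ (infDist · K) p := by
  obtain ⟨q₁, hq₁, q₂, hq₂, hne, hmin₁, hmin₂⟩ := hp
  intro hdiff
  set L := fderiv ℝ (infDist · K) p
  have hnorm_eq : ‖q₁ - p‖ = ‖q₂ - p‖ := by
    rw [← dist_eq_norm, ← dist_eq_norm, dist_comm, ← infDist_eq_dist_of_isMinOn hq₁ hmin₁,
      dist_comm, ← infDist_eq_dist_of_isMinOn hq₂ hmin₂]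
  have hL : ‖L‖ ≤ 1 := by
    simpa using norm_fderiv_le_of_lipschitz ℝ (lipschitz_infDist_pt K) (x₀ := p)
  have hsum_le : ‖q₁ - p‖ + ‖q₂ - p‖ ≤ ‖(q₁ - p) + (q₂ - p)‖ :=
    calc ‖q₁ - p‖ + ‖q₂ - p‖
        = ‖L ((q₁ - p) + (q₂ - p))‖ := by
          rw [map_add, fderiv_infDist_apply_sub_of_isMinOn hdiff hq₁ hmin₁,
            fderiv_infDist_apply_sub_of_isMinOn hdiff hq₂ hmin₂, ← neg_add, norm_neg,
            Real.norm_of_nonneg (by positivity)]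
      _ ≤ ‖L‖ * ‖(q₁ - p) + (q₂ - p)‖ := L.le_opNorm _
      _ ≤ ‖(q₁ - p) + (q₂ - p)‖ := mul_le_of_le_one_left (norm_nonneg _) hL
  have hsame : q₁ - p = q₂ - p :=
    eq_of_norm_eq_of_norm_add_eq hnorm_eq (le_antisymm (norm_add_le _ _) hsum_le)
  exact hne (sub_left_inj.1 hsame)

theorem addHaar_medialAxis [FiniteDimensional ℝ E] [StrictConvexSpace ℝ E] [MeasurableSpace E]
    [BorelSpace E] (μ : Measure E) [μ.IsAddHaarMeasure] (K : Set E) :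
    μ (medialAxis K) = 0 :=
  measure_mono_null (fun _ => not_differentiableAt_infDist_of_mem_medialAxis)
    (ae_iff.1 (lipschitz_infDist_pt K).ae_differentiableAt)

end NormedSpace

theorem medial_axis_measure_zero_general {d : ℕ} (K : Set (EuclideanSpace ℝ (Fin d))) :
    MeasureTheory.volume
      {p : EuclideanSpace ℝ (Fin d) |
        ∃ q₁ ∈ K, ∃ q₂ ∈ K, q₁ ≠ q₂ ∧
          (∀ q ∈ K, ‖p - q₁‖ ≤ ‖p - q‖) ∧ (∀ q ∈ K, ‖p - q₂‖ ≤ ‖p - q‖)} = 0 := by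
  refine measure_mono_null ?_ (addHaar_medialAxis volume K)
  rintro p ⟨q₁, hq₁, q₂, hq₂, hne, hmin₁, hmin₂⟩
  exact ⟨q₁, hq₁, q₂, hq₂, hne,
    isMinOn_iff.2 fun q hq => by simpa only [dist_eq_norm] using hmin₁ q hq,
    isMinOn_iff.2 fun q hq => by simpa only [dist_eq_norm] using hmin₂ q hq⟩

/-- **The medial axis of a compact set has Lebesgue measure zero.**
Let `K` be a compact subset of `ℝ^d`.  The set of points `p ∈ ℝ^d` that admit more than
one nearest point in `K` (i.e. the minimum of `‖p − q‖` over `q ∈ K` is attained at at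
least two distinct points of `K`) has Lebesgue measure zero in `ℝ^d`. -/
theorem medial_axis_measure_zero {d : ℕ} (K : Set (EuclideanSpace ℝ (Fin d)))
    (hK : IsCompact K) :
    MeasureTheory.volume
      {p : EuclideanSpace ℝ (Fin d) |
        ∃ q₁ ∈ K, ∃ q₂ ∈ K, q₁ ≠ q₂ ∧
          (∀ q ∈ K, ‖p - q₁‖ ≤ ‖p - q‖) ∧ (∀ q ∈ K, ‖p - q₂‖ ≤ ‖p - q‖)} = 0 :=
  medial_axis_measure_zero_general K
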